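/- arXiv:0910.1115 — 3 statements merged into one kernel-verified Lean document; each statement's English description precedes it below -/
import Mathlib

section
/- Let α > -1/2 and j_α be defined by the Mehler formula. Then there exist positive constants c₁, c₂ (depending only on α) such that for all λ, t > 0: c₁·min{1, (λt)²} ≤ 1 - j_α(λt) ≤ c₂·min{1, (λt)²}. -/
/-!
Write `w y = (1 - y ^ 2) ^ (α - 1/2)`. The substitution `x = y ^ 2` turns `∫₀¹ w` into the beta
integral `B(1/2, α + 1/2)`, so the Mehler constant is exactly `1 / ∫₀¹ w` and
`1 - j r = C ∫₀¹ w y (1 - cos (r y)) dy` is a positive average of `1 - cos (r y)`.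
The elementary bounds `2 x² / π² ≤ 1 - cos x ≤ min 2 (x² / 2)` (the lower one for `|x| ≤ π`) give
the upper estimate for all `r` and the lower one for `r ≤ 1`. For `r ≥ 1` the average is positive
and continuous in `r`, and tends to `∫₀¹ w > 0` by the Riemann–Lebesgue lemma, so it is bounded
below.
-/

open MeasureTheory Real Set Filter Topology intervalIntegral

section SquareSubstitution

theorem strictMonoOn_sq_Icc_zero_one : StrictMonoOn (fun y : ℝ => y ^ 2) (Icc 0 1) :=
  (pow_left_strictMonoOn₀ two_ne_zero).mono fun _ hy => hy.1

theorem image_sq_Ioo_zero_one : (fun y : ℝ => y ^ 2) '' Ioo 0 1 = Ioo 0 1 := by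
  simpa using (continuous_pow 2).continuousOn.image_Ioo_of_strictMonoOn zero_le_one
    strictMonoOn_sq_Icc_zero_one

variable (g : ℝ → ℝ)

theorem integrableOn_Ioo_comp_sq_iff :
    IntegrableOn (fun y => 2 * y * g (y ^ 2)) (Ioo 0 1) ↔ IntegrableOn g (Ioo 0 1) := by
  have h := integrableOn_image_iff_integrableOn_abs_deriv_smul measurableSet_Ioo
    (fun y _ => by simpa using (hasDerivAt_pow 2 y).hasDerivWithinAt)
    (strictMonoOn_sq_Icc_zero_one.injOn.mono Ioo_subset_Icc_self) g
  rw [image_sq_Ioo_zero_one] at h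
  rw [h]
  refine integrableOn_congr_fun (fun y hy => ?_) measurableSet_Ioo
  simp [abs_of_pos hy.1]

theorem integral_Ioo_comp_sq :
    ∫ y in Ioo 0 1, 2 * y * g (y ^ 2) = ∫ x in Ioo 0 1, g x := by
  have h := integral_image_eq_integral_abs_deriv_smul measurableSet_Ioo
    (fun y _ => by simpa using (hasDerivAt_pow 2 y).hasDerivWithinAt)
    (strictMonoOn_sq_Icc_zero_one.injOn.mono Ioo_subset_Icc_self) g
  rw [image_sq_Ioo_zero_one] at h
  rw [h]
  refine setIntegral_congr_fun measurableSet_Ioo (fun y hy => ?_)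
  simp [abs_of_pos hy.1]

end SquareSubstitution

section Beta

variable {a b : ℝ}

theorem ofReal_rpow_mul_one_sub_rpow {x : ℝ} (hx : x ∈ Icc (0 : ℝ) 1) :
    ((x ^ (a - 1) * (1 - x) ^ (b - 1) : ℝ) : ℂ) =
      (x : ℂ) ^ ((a : ℂ) - 1) * (1 - (x : ℂ)) ^ ((b : ℂ) - 1) := by
  rw [Complex.ofReal_mul, Complex.ofReal_cpow hx.1, Complex.ofReal_cpow (sub_nonneg.2 hx.2)]
  push_cast
  rfl

theorem intervalIntegrable_rpow_mul_one_sub_rpow (ha : 0 < a) (hb : 0 < b) :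
    IntervalIntegrable (fun x : ℝ => x ^ (a - 1) * (1 - x) ^ (b - 1)) volume 0 1 := by
  refine (Complex.betaIntegral_convergent (u := a) (v := b) (by simpa) (by simpa)).norm.congr_uIoo
    fun x hx => ?_
  rw [uIoo_of_le zero_le_one] at hx
  simp only
  rw [← ofReal_rpow_mul_one_sub_rpow (Ioo_subset_Icc_self hx), Complex.norm_real,
    Real.norm_of_nonneg (mul_nonneg (rpow_nonneg hx.1.le _) (rpow_nonneg (sub_nonneg.2 hx.2.le) _))]

theorem integral_rpow_mul_one_sub_rpow (ha : 0 < a) (hb : 0 < b) :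
    ∫ x in (0 : ℝ)..1, x ^ (a - 1) * (1 - x) ^ (b - 1) = Gamma a * Gamma b / Gamma (a + b) := by
  have h := Complex.betaIntegral_eq_Gamma_mul_div a b (by simpa) (by simpa)
  rw [Complex.betaIntegral, ← integral_congr fun x hx => ofReal_rpow_mul_one_sub_rpow
    (by rwa [uIcc_of_le zero_le_one] at hx), integral_ofReal, ← Complex.ofReal_add,
    Complex.Gamma_ofReal, Complex.Gamma_ofReal, Complex.Gamma_ofReal] at h
  exact_mod_cast h

end Beta

section MehlerWeight

variable {β : ℝ}

-- The integrand of `B(1/2, β + 1)` at `x = y ^ 2`, times the Jacobian `2 y`.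
theorem one_sub_sq_rpow_eq_half_mul_comp_sq {y : ℝ} (hy : 0 < y) :
    (1 - y ^ 2) ^ β =
      1 / 2 * (2 * y * ((y ^ 2) ^ ((1 / 2 : ℝ) - 1) * (1 - y ^ 2) ^ ((β + 1) - 1))) := by
  rw [show (1 / 2 : ℝ) - 1 = -(1 / 2) by norm_num, rpow_neg (sq_nonneg y), ← sqrt_eq_rpow,
    sqrt_sq hy.le, add_sub_cancel_right]
  field_simp

theorem intervalIntegrable_one_sub_sq_rpow (hβ : -1 < β) :
    IntervalIntegrable (fun y : ℝ => (1 - y ^ 2) ^ β) volume 0 1 := by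
  have h := intervalIntegrable_rpow_mul_one_sub_rpow (a := 1 / 2) (b := β + 1) one_half_pos
    (by linarith)
  rw [intervalIntegrable_iff_integrableOn_Ioo_of_le zero_le_one] at h ⊢
  rw [← integrableOn_Ioo_comp_sq_iff] at h
  exact IntegrableOn.congr_fun (h.const_mul (1 / 2))
    (fun y hy => (one_sub_sq_rpow_eq_half_mul_comp_sq hy.1).symm) measurableSet_Ioo

theorem integral_one_sub_sq_rpow (hβ : -1 < β) :
    ∫ y in (0 : ℝ)..1, (1 - y ^ 2) ^ β = √π * Gamma (β + 1) / (2 * Gamma (β + 3 / 2)) := by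
  have h := integral_rpow_mul_one_sub_rpow (a := 1 / 2) (b := β + 1) one_half_pos (by linarith)
  rw [integral_of_le zero_le_one, integral_Ioc_eq_integral_Ioo] at h ⊢
  rw [← integral_Ioo_comp_sq, Gamma_one_half_eq, show 1 / 2 + (β + 1) = β + 3 / 2 by ring] at h
  rw [setIntegral_congr_fun measurableSet_Ioo fun y hy => one_sub_sq_rpow_eq_half_mul_comp_sq hy.1,
    MeasureTheory.integral_const_mul, h]
  ring

end MehlerWeight

-- `∫ f v cos (r v) dv` is the real part of the Fourier transform of `f` at `r / (2π)`.
theorem tendsto_integral_mul_cos_atTop {f : ℝ → ℝ} (hf : Integrable f) :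
    Tendsto (fun r => ∫ v, f v * cos (r * v)) atTop (𝓝 0) := by
  have hRL := (Real.tendsto_integral_exp_smul_cocompact (fun v => (f v : ℂ))).mono_left
    (cocompact_eq_atBot_atTop (α := ℝ) ▸ le_sup_right)
  have hscale : Tendsto (fun r : ℝ => r / (2 * π)) atTop atTop :=
    tendsto_id.atTop_div_const (by positivity)
  have hre := (Complex.continuous_re.tendsto 0).comp (hRL.comp hscale)
  rw [Complex.zero_re] at hre
  refine hre.congr fun r => ?_
  have hint : Integrable fun v : ℝ => Real.fourierChar (-(v * (r / (2 * π)))) • (f v : ℂ) :=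
    (VectorFourier.fourierIntegral_convergent_iff (L := LinearMap.mul ℝ ℝ)
      Real.continuous_fourierChar continuous_mul _).2 hf.ofReal
  simp only [Function.comp_apply]
  rw [← Complex.reCLM_apply, ← ContinuousLinearMap.integral_comp_comm _ hint]
  congr 1 with v
  rw [Circle.smul_def, Real.fourierChar_apply, Complex.reCLM_apply, smul_eq_mul,
    Complex.re_mul_ofReal, Complex.exp_ofReal_mul_I_re, mul_comm, ← cos_neg]
  field_simp

section CosineTransform

variable {w : ℝ → ℝ} {a b : ℝ}

theorem tendsto_intervalIntegral_mul_cos_atTop (hw : IntervalIntegrable w volume a b) :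
    Tendsto (fun r => ∫ y in a..b, w y * cos (r * y)) atTop (𝓝 0) := by
  have h := tendsto_integral_mul_cos_atTop ((integrable_indicator_iff measurableSet_uIoc).2 hw.def')
  simp_rw [intervalIntegral_eq_integral_uIoc, ← MeasureTheory.integral_indicator measurableSet_uIoc]
  simpa only [indicator_mul_left, smul_zero] using h.const_smul (if a ≤ b then (1 : ℝ) else -1)

theorem continuous_intervalIntegral_mul_cos (hw : IntervalIntegrable w volume a b) :
    Continuous fun r => ∫ y in a..b, w y * cos (r * y) := by
  refine continuous_of_dominated_interval (bound := fun y => |w y|)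
    (fun r => hw.def'.aestronglyMeasurable.mul (by fun_prop : Continuous _).aestronglyMeasurable)
    (fun r => ae_of_all _ fun y _ => ?_) hw.abs (ae_of_all _ fun y _ => by fun_prop)
  rw [norm_mul, norm_eq_abs, norm_eq_abs]
  exact mul_le_of_le_one_right (abs_nonneg _) (abs_cos_le_one _)

theorem intervalIntegral_mul_one_sub_cos (hw : IntervalIntegrable w volume a b) (r : ℝ) :
    ∫ y in a..b, w y * (1 - cos (r * y)) = (∫ y in a..b, w y) - ∫ y in a..b, w y * cos (r * y) := by
  simp_rw [mul_one_sub]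
  exact integral_sub hw (hw.mul_continuousOn (by fun_prop))

theorem intervalIntegral_pos_of_nonneg_of_pos_near_left {f : ℝ → ℝ} {c : ℝ}
    (hf : IntervalIntegrable f volume a b) (hac : a < c) (hcb : c ≤ b)
    (hnonneg : ∀ x ∈ Ioo a b, 0 ≤ f x) (hpos : ∀ x ∈ Ioo a c, 0 < f x) :
    0 < ∫ x in a..b, f x := by
  have hc : c ∈ uIcc a b := by rw [uIcc_of_le (hac.le.trans hcb)]; exact ⟨hac.le, hcb⟩
  have hfac := hf.mono_set (uIcc_subset_uIcc_left hc)
  have hfcb := hf.mono_set (uIcc_subset_uIcc_right hc)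
  rw [← integral_add_adjacent_intervals hfac hfcb]
  have hleft : 0 < ∫ x in a..c, f x := intervalIntegral_pos_of_pos_on hfac hpos hac
  have hright : 0 ≤ ∫ x in c..b, f x := by
    simpa using integral_mono_on_of_le_Ioo hcb intervalIntegrable_const hfcb
      fun x hx => hnonneg x ⟨hac.trans hx.1, hx.2⟩
  linarith

end CosineTransform

theorem exists_pos_forall_le_of_tendsto {F : ℝ → ℝ} {a L : ℝ} (hF : ContinuousOn F (Ici a))
    (hpos : ∀ r ≥ a, 0 < F r) (hL : Tendsto F atTop (𝓝 L)) (hL_pos : 0 < L) :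
    ∃ δ > 0, ∀ r ≥ a, δ ≤ F r := by
  obtain ⟨R, hR⟩ := (hL.eventually_const_lt (half_lt_self hL_pos)).exists_forall_of_atTop
  obtain ⟨r₀, hr₀, hmin⟩ := isCompact_Icc.exists_isMinOn (nonempty_Icc.2 (le_max_left a R))
    (hF.mono Icc_subset_Ici_self)
  refine ⟨min (L / 2) (F r₀), lt_min (half_pos hL_pos) (hpos r₀ hr₀.1), fun r hr => ?_⟩
  rcases le_total r (max a R) with h | h
  · exact (min_le_right _ _).trans (hmin ⟨hr, h⟩)
  · exact (min_le_left _ _).trans (hR r ((le_max_right a R).trans h)).le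

theorem one_sub_cos_le_two_mul_min_one_sq (x : ℝ) : 1 - cos x ≤ 2 * min 1 (x ^ 2) := by
  rcases le_total 1 (x ^ 2) with h | h
  · rw [min_eq_left h]
    linarith [neg_one_le_cos x]
  · rw [min_eq_right h]
    nlinarith [one_sub_sq_div_two_le_cos (x := x), sq_nonneg x]

section OneSubCos

variable {w : ℝ → ℝ}

theorem intervalIntegral_mul_one_sub_cos_le (hw : IntervalIntegrable w volume 0 1)
    (hw_nonneg : ∀ y ∈ Ioo (0 : ℝ) 1, 0 ≤ w y) (r : ℝ) :
    ∫ y in (0 : ℝ)..1, w y * (1 - cos (r * y)) ≤ 2 * min 1 (r ^ 2) * ∫ y in (0 : ℝ)..1, w y := by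
  rw [← intervalIntegral.integral_const_mul]
  refine integral_mono_on_of_le_Ioo zero_le_one (hw.mul_continuousOn (by fun_prop))
    (hw.const_mul _) fun y hy => ?_
  have hry : (r * y) ^ 2 ≤ r ^ 2 := by
    rw [mul_pow]
    exact mul_le_of_le_one_right (sq_nonneg r) (pow_le_one₀ hy.1.le hy.2.le)
  rw [mul_comm (2 * _)]
  gcongr
  · exact hw_nonneg y hy
  · exact (one_sub_cos_le_two_mul_min_one_sq _).trans (by gcongr)

theorem mul_sq_le_intervalIntegral_mul_one_sub_cos (hw : IntervalIntegrable w volume 0 1)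
    (hw_nonneg : ∀ y ∈ Ioo (0 : ℝ) 1, 0 ≤ w y) {r : ℝ} (hr : |r| ≤ π) :
    2 / π ^ 2 * r ^ 2 * ∫ y in (0 : ℝ)..1, w y * y ^ 2 ≤
      ∫ y in (0 : ℝ)..1, w y * (1 - cos (r * y)) := by
  rw [← intervalIntegral.integral_const_mul]
  refine integral_mono_on_of_le_Ioo zero_le_one ((hw.mul_continuousOn (by fun_prop)).const_mul _)
    (hw.mul_continuousOn (by fun_prop)) fun y hy => ?_
  have hry : |r * y| ≤ π := by
    rw [abs_mul, abs_of_pos hy.1]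
    exact mul_le_of_le_one_right (abs_nonneg r) hy.2.le |>.trans hr
  have hcos := cos_le_one_sub_mul_cos_sq hry
  calc 2 / π ^ 2 * r ^ 2 * (w y * y ^ 2) = w y * (2 / π ^ 2 * (r * y) ^ 2) := by ring
    _ ≤ w y * (1 - cos (r * y)) := by gcongr; exacts [hw_nonneg y hy, by linarith]

theorem intervalIntegral_mul_one_sub_cos_pos (hw : IntervalIntegrable w volume 0 1)
    (hw_pos : ∀ y ∈ Ioo (0 : ℝ) 1, 0 < w y) {r : ℝ} (hr : 0 < r) :
    0 < ∫ y in (0 : ℝ)..1, w y * (1 - cos (r * y)) := by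
  refine intervalIntegral_pos_of_nonneg_of_pos_near_left (c := min 1 (π / r))
    (hw.mul_continuousOn (by fun_prop)) (lt_min one_pos (by positivity)) (min_le_left _ _)
    (fun y hy => mul_nonneg (hw_pos y hy).le (by linarith [cos_le_one (r * y)])) fun y hy => ?_
  have hy1 : y < 1 := hy.2.trans_le (min_le_left _ _)
  have hry : |r * y| ≤ π := by
    rw [abs_of_pos (mul_pos hr hy.1), ← le_div_iff₀' hr]
    exact hy.2.le.trans (min_le_right _ _)
  have hcos := cos_le_one_sub_mul_cos_sq hry
  have : 0 < 2 / π ^ 2 * (r * y) ^ 2 := by have := hy.1; positivity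
  exact mul_pos (hw_pos y ⟨hy.1, hy1⟩) (by linarith)

theorem exists_pos_mul_min_le_intervalIntegral_mul_one_sub_cos
    (hw : IntervalIntegrable w volume 0 1) (hw_pos : ∀ y ∈ Ioo (0 : ℝ) 1, 0 < w y) :
    ∃ c > 0, ∀ r > 0, c * min 1 (r ^ 2) ≤ ∫ y in (0 : ℝ)..1, w y * (1 - cos (r * y)) := by
  have hw_nonneg y (hy : y ∈ Ioo (0 : ℝ) 1) := (hw_pos y hy).le
  have hI : 0 < ∫ y in (0 : ℝ)..1, w y := intervalIntegral_pos_of_pos_on hw hw_pos one_pos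
  have hM : 0 < ∫ y in (0 : ℝ)..1, w y * y ^ 2 :=
    intervalIntegral_pos_of_pos_on (hw.mul_continuousOn (by fun_prop))
      (fun y hy => mul_pos (hw_pos y hy) (pow_pos hy.1 2)) one_pos
  have hF : (fun r => ∫ y in (0 : ℝ)..1, w y * (1 - cos (r * y))) =
      fun r => (∫ y in (0 : ℝ)..1, w y) - ∫ y in (0 : ℝ)..1, w y * cos (r * y) :=
    funext (intervalIntegral_mul_one_sub_cos hw)
  obtain ⟨δ, hδ, hfar⟩ := exists_pos_forall_le_of_tendsto (a := 1)
    (by rw [hF]; exact (continuous_const.sub (continuous_intervalIntegral_mul_cos hw)).continuousOn)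
    (fun r hr => intervalIntegral_mul_one_sub_cos_pos hw hw_pos (one_pos.trans_le hr))
    (by rw [hF]; simpa using tendsto_const_nhds.sub (tendsto_intervalIntegral_mul_cos_atTop hw)) hI
  refine ⟨min (2 / π ^ 2 * ∫ y in (0 : ℝ)..1, w y * y ^ 2) δ, by positivity, fun r hr => ?_⟩
  rcases le_total r 1 with h | h
  · have hrπ : |r| ≤ π := by rw [abs_of_pos hr]; linarith [pi_gt_three]
    rw [min_eq_right (show r ^ 2 ≤ 1 by nlinarith)]
    calc _ ≤ 2 / π ^ 2 * (∫ y in (0 : ℝ)..1, w y * y ^ 2) * r ^ 2 := by gcongr; apply min_le_left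
      _ = 2 / π ^ 2 * r ^ 2 * ∫ y in (0 : ℝ)..1, w y * y ^ 2 := by ring
      _ ≤ _ := mul_sq_le_intervalIntegral_mul_one_sub_cos hw hw_nonneg hrπ
  · rw [min_eq_left (show 1 ≤ r ^ 2 by nlinarith), mul_one]
    exact (min_le_right _ _).trans (hfar r h)

end OneSubCos

theorem one_sub_bessel_two_sided (α : ℝ) (hα : α > -1/2) (j : ℝ → ℝ)
    (hj : ∀ r : ℝ, j r = (2 * Real.Gamma (α + 1) / (Real.sqrt Real.pi * Real.Gamma (α + 1/2))) *
      ∫ y in (0:ℝ)..1, (1 - y ^ 2) ^ (α - 1/2) * Real.cos (r * y)) :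
    ∃ c₁ c₂ : ℝ, 0 < c₁ ∧ 0 < c₂ ∧ ∀ lam t : ℝ, 0 < lam → 0 < t →
      c₁ * min 1 ((lam * t) ^ 2) ≤ 1 - j (lam * t) ∧
      1 - j (lam * t) ≤ c₂ * min 1 ((lam * t) ^ 2) := by
  set C := 2 * Gamma (α + 1) / (√π * Gamma (α + 1 / 2))
  have hβ : -1 < α - 1 / 2 := by linarith
  have hw := intervalIntegrable_one_sub_sq_rpow hβ
  have hw_pos (y : ℝ) (hy : y ∈ Ioo (0 : ℝ) 1) : 0 < (1 - y ^ 2) ^ (α - 1 / 2) :=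
    rpow_pos_of_pos (by nlinarith [hy.1, hy.2]) _
  have hΓ₁ := Gamma_pos_of_pos (by linarith : 0 < α + 1)
  have hΓ₂ := Gamma_pos_of_pos (by linarith : 0 < α + 1 / 2)
  have hC : 0 < C := by positivity
  have hC_mul_integral : C * ∫ y in (0 : ℝ)..1, (1 - y ^ 2) ^ (α - 1 / 2) = 1 := by
    rw [integral_one_sub_sq_rpow hβ, show α - 1 / 2 + 1 = α + 1 / 2 by ring,
      show α - 1 / 2 + 3 / 2 = α + 1 by ring]
    rw [div_mul_div_comm, div_eq_one_iff_eq (by positivity)]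
    ring
  have h_one_sub (r : ℝ) :
      1 - j r = C * ∫ y in (0 : ℝ)..1, (1 - y ^ 2) ^ (α - 1 / 2) * (1 - cos (r * y)) := by
    rw [hj, intervalIntegral_mul_one_sub_cos hw, mul_sub, hC_mul_integral]
  obtain ⟨c, hc, h_lower⟩ := exists_pos_mul_min_le_intervalIntegral_mul_one_sub_cos hw hw_pos
  refine ⟨C * c, 2, by positivity, two_pos, fun lam t hlam ht => ⟨?_, ?_⟩⟩
  · rw [h_one_sub, mul_assoc]
    exact mul_le_mul_of_nonneg_left (h_lower _ (mul_pos hlam ht)) hC.le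
  · calc 1 - j (lam * t)
        ≤ C * (2 * min 1 ((lam * t) ^ 2) * ∫ y in (0 : ℝ)..1, (1 - y ^ 2) ^ (α - 1 / 2)) := by
          rw [h_one_sub]
          gcongr
          exact intervalIntegral_mul_one_sub_cos_le hw (fun y hy => (hw_pos y hy).le) _
      _ = 2 * min 1 ((lam * t) ^ 2) := by rw [mul_left_comm, hC_mul_integral, mul_one]
end

section
/- Let j_{1/2}(r) = sin(r)/r (with j_{1/2}(0)=1) and φ_λ(t) = sin(λt)/(λ sinh t). Then for complex λ = μ + iη with |η| ≤ 1 and all t > 0 and μ ∈ ℝ, |1 - φ_{μ+iη}(t)| ≥ (t/sinh t)·(1 - j_{1/2}(μt)). -/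
/-!
Writing `λ = μ + iη`, the function `sin (λ t) / λ` is `∫₀ᵗ cos (λ s) ds`, whose real part is
`∫₀ᵗ cos (μ s) cosh (η s) ds`, while `sinh t = ∫₀ᵗ cosh s ds`. Hence
`sinh t · Re (1 - φ_λ(t)) = ∫₀ᵗ (cosh s - cos (μ s) cosh (η s)) ds`. For `|η| ≤ 1` the integrand
dominates `1 - cos (μ s)`, and `∫₀ᵗ (1 - cos (μ s)) ds = t (1 - j_{1/2}(μ t))`; finally
`Re w ≤ ‖w‖`.
-/

open intervalIntegral

namespace Complex

theorem re_cos_add_mul_I (x y : ℝ) : (cos (x + y * I)).re = Real.cos x * Real.cosh y := by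
  rw [cos_add_mul_I, ← ofReal_cos, ← ofReal_cosh, ← ofReal_sin, ← ofReal_sinh]
  simp only [sub_re, mul_re, mul_im, ofReal_re, ofReal_im, I_re, I_im]
  ring

theorem re_sin_mul_div_eq_integral {μ η : ℝ} (hz : (μ + η * I : ℂ) ≠ 0) (t : ℝ) :
    (sin ((μ + η * I) * t) / (μ + η * I)).re =
      ∫ s in 0..t, Real.cos (μ * s) * Real.cosh (η * s) := by
  have hcos : Continuous fun s : ℝ => cos ((μ + η * I) * s) := by fun_prop
  have hint : ∫ s in 0..t, cos ((μ + η * I) * s) = sin ((μ + η * I) * t) / (μ + η * I) := by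
    simpa using integral_cos_mul_complex hz 0 t
  rw [← hint, ← RCLike.re_to_complex,
    ← intervalIntegral_re (hcos.intervalIntegrable 0 t)]
  refine integral_congr fun s _ => ?_
  have hs : (μ + η * I) * s = ((μ * s : ℝ) : ℂ) + ((η * s : ℝ) : ℂ) * I := by push_cast; ring
  simp only [hs, RCLike.re_to_complex, re_cos_add_mul_I]

end Complex

namespace Real

theorem integral_one_sub_cos_mul {μ : ℝ} (hμ : μ ≠ 0) (t : ℝ) :
    ∫ s in 0..t, (1 - cos (μ * s)) = t - sin (μ * t) / μ := by
  rw [integral_sub intervalIntegrable_const ((by fun_prop : Continuous _).intervalIntegrable _ _),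
    integral_comp_mul_left _ hμ]
  simp [div_eq_inv_mul]

theorem integral_cosh (a b : ℝ) : ∫ x in a..b, cosh x = sinh b - sinh a :=
  integral_eq_sub_of_hasDerivAt (fun x _ => hasDerivAt_sinh x)
    (continuous_cosh.intervalIntegrable a b)

theorem one_sub_cos_le_cosh_sub_cos_mul_cosh (x : ℝ) {y z : ℝ} (h : |z| ≤ |y|) :
    1 - cos x ≤ cosh y - cos x * cosh z := by
  have hzy : cosh z ≤ cosh y := cosh_le_cosh.mpr h
  nlinarith [cos_le_one x, one_le_cosh z]

end Real

open Real in
theorem sub_sin_mul_div_le_sinh_sub_re {μ η t : ℝ} (hμ : μ ≠ 0) (hη : |η| ≤ 1) (ht : 0 ≤ t) :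
    t - sin (μ * t) / μ ≤
      sinh t - (Complex.sin ((μ + η * Complex.I) * t) / (μ + η * Complex.I)).re := by
  have hz : (μ + η * Complex.I : ℂ) ≠ 0 := fun h => hμ (by simpa using congrArg Complex.re h)
  have hsinh : sinh t = ∫ s in 0..t, cosh s := by simp [integral_cosh]
  rw [← integral_one_sub_cos_mul hμ, Complex.re_sin_mul_div_eq_integral hz, hsinh,
    ← integral_sub (continuous_cosh.intervalIntegrable _ _)
      ((by fun_prop : Continuous _).intervalIntegrable _ _)]
  refine integral_mono_on ht ((by fun_prop : Continuous _).intervalIntegrable _ _)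
    ((by fun_prop : Continuous _).intervalIntegrable _ _) fun s hs => ?_
  refine one_sub_cos_le_cosh_sub_cos_mul_cosh _ ?_
  rw [abs_mul, abs_of_nonneg hs.1]
  exact mul_le_of_le_one_left hs.1 hη

theorem hyperbolic_comparison (j : ℝ → ℝ)
    (hj0 : j 0 = 1) (hj : ∀ r : ℝ, r ≠ 0 → j r = Real.sin r / r) :
    ∀ μ η t : ℝ, |η| ≤ 1 → 0 < t →
      ‖(1 - Complex.sin ((μ + η * Complex.I) * t) /
          ((μ + η * Complex.I) * (Real.sinh t : ℂ)))‖ ≥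
        (t / Real.sinh t) * (1 - j (μ * t)) := by
  intro μ η t hη ht
  rcases eq_or_ne μ 0 with rfl | hμ
  · simp [hj0]
  have hsinh : 0 < Real.sinh t := Real.sinh_pos_iff.mpr ht
  set w := Complex.sin ((μ + η * Complex.I) * t) / (μ + η * Complex.I)
  calc (t / Real.sinh t) * (1 - j (μ * t))
      = (t - Real.sin (μ * t) / μ) / Real.sinh t := by
        rw [hj _ (mul_ne_zero hμ ht.ne')]
        field_simp
    _ ≤ (Real.sinh t - w.re) / Real.sinh t := by
        gcongr ?_ / _
        exact sub_sin_mul_div_le_sinh_sub_re hμ hη ht.le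
    _ = (1 - w / (Real.sinh t : ℂ)).re := by
        rw [Complex.sub_re, Complex.one_re, Complex.div_ofReal_re]
        field_simp
    _ ≤ _ := by
        rw [← div_div]
        exact Complex.re_le_norm _
end

section
/- Let f ∈ L¹(ℝⁿ), n ≥ 2. Then there is C = C(n) > 0 such that for all t > 0: sup_{|ξ| > 1/t} |f̂(ξ)| ≤ C·‖M^t f - f‖₁ (a quantified Riemann–Lebesgue lemma). -/
open MeasureTheory FourierTransform

/-- The spherical mean of `f` over the sphere of radius `t` centered at `x`,
with respect to the normalized surface measure on the unit sphere. -/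
noncomputable def sphericalMean (n : ℕ) (f : EuclideanSpace ℝ (Fin n) → ℂ) (t : ℝ)
    (x : EuclideanSpace ℝ (Fin n)) : ℂ :=
  (((volume : Measure (EuclideanSpace ℝ (Fin n))).toSphere Set.univ).toReal)⁻¹ •
    ∫ ω : Metric.sphere (0 : EuclideanSpace ℝ (Fin n)) 1,
      f (x + t • (ω : EuclideanSpace ℝ (Fin n)))
      ∂(volume : Measure (EuclideanSpace ℝ (Fin n))).toSphere

/-!
The spherical mean is an average of translates of `f`, so its Fourier transform is `𝓕 f ξ`
times the multiplier `m (t • ξ)`, where `m ζ` is the normalized integral of `𝐞 ⟪ω, ζ⟫` over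
the unit sphere. Hence `‖1 - m (t • ξ)‖ * ‖𝓕 f ξ‖ ≤ ‖M^t f - f‖₁`, and it suffices to bound
`‖1 - m ζ‖` from below uniformly in `‖ζ‖ > 1`.

Writing `ζ = r • e` with `‖e‖ = 1`, the real part of `1 - m ζ` is the average of
`1 - cos (2π r s)` against the distribution of the latitude `s = ⟪e, ω⟫`. In dimension `≥ 2`
this distribution does not depend on `e` and is absolutely continuous, hence uniformly so:
sets of small Lebesgue measure carry less than half of the sphere. The latitudes
`s ∈ [-1, 1]` for which `r s` lies within `η` of an integer form a set of Lebesgue measure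
`≤ 14 η` for every `r > 1`, so for small `η` at least half of the sphere sees
`1 - cos (2π r s) ≥ 1 - cos (2π η)`.
-/

open Metric Set Module Real
open scoped RealInnerProductSpace ENNReal

section FourierOfTranslates

variable {V Ω E : Type*} [NormedAddCommGroup V] [InnerProductSpace ℝ V] [FiniteDimensional ℝ V]
  [MeasurableSpace V] [BorelSpace V] [MeasurableSpace Ω] {μ : Measure Ω} [IsFiniteMeasure μ]
  [NormedAddCommGroup E] {f : V → E} {g : Ω → V}

theorem integrable_prod_comp_add (hf : Integrable f) (hg : Measurable g) :
    Integrable (fun p : Ω × V => f (p.2 + g p.1)) (μ.prod volume) := by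
  have hΦ : Measure.QuasiMeasurePreserving (fun p : Ω × V => p.2 + g p.1)
      (μ.prod volume) volume :=
    QuasiMeasurePreserving.prod_of_right (by fun_prop) (.of_forall fun ω =>
      (measurePreserving_add_right volume (g ω)).quasiMeasurePreserving)
  refine (integrable_prod_iff (hf.aestronglyMeasurable.comp_quasiMeasurePreserving hΦ)).2
    ⟨.of_forall fun ω => hf.comp_add_right (g ω), ?_⟩
  simpa only [Function.comp_apply, integral_add_right_eq_self (fun x => ‖f x‖)] using
    integrable_const (μ := μ) (∫ x, ‖f x‖)

theorem integrable_integral_comp_add [NormedSpace ℝ E] (hf : Integrable f)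
    (hg : Measurable g) : Integrable (fun x => ∫ ω, f (x + g ω) ∂μ) :=
  (integrable_prod_comp_add hf hg).integral_prod_right

theorem fourier_integral_comp_add [NormedSpace ℂ E] [CompleteSpace E] (hf : Integrable f)
    (hg : Measurable g) (ξ : V) :
    𝓕 (fun x => ∫ ω, f (x + g ω) ∂μ) ξ = (∫ ω, (𝐞 ⟪g ω, ξ⟫ : ℂ) ∂μ) • 𝓕 f ξ := by
  have hint : Integrable (fun p : V × Ω => (𝐞 (-⟪p.1, ξ⟫) : ℂ) • f (p.1 + g p.2))
      (volume.prod μ) :=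
    (integrable_prod_comp_add hf hg).swap.bdd_smul 1 (by fun_prop)
      (.of_forall fun p => (Circle.norm_coe _).le)
  calc 𝓕 (fun x => ∫ ω, f (x + g ω) ∂μ) ξ
      = ∫ x, ∫ ω, (𝐞 (-⟪x, ξ⟫) : ℂ) • f (x + g ω) ∂μ := by
        simp only [Real.fourier_eq, Circle.smul_def, integral_smul]
    _ = ∫ ω, ∫ x, (𝐞 (-⟪x, ξ⟫) : ℂ) • f (x + g ω) ∂volume ∂μ :=
        integral_integral_swap hint
    _ = ∫ ω, (𝐞 ⟪g ω, ξ⟫ : ℂ) • 𝓕 f ξ ∂μ := by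
        congr 1 with ω
        have := congrFun (VectorFourier.fourierIntegral_comp_add_right 𝐞 volume
          (innerₗ V) f (g ω)) ξ
        simpa [VectorFourier.fourierIntegral, Real.fourier_eq, Circle.smul_def] using this
    _ = _ := integral_smul_const _ _

theorem fourier_sub_apply [NormedSpace ℂ E] {f₁ f₂ : V → E} (h₁ : Integrable f₁)
    (h₂ : Integrable f₂) (ξ : V) : 𝓕 (fun x => f₁ x - f₂ x) ξ = 𝓕 f₁ ξ - 𝓕 f₂ ξ := by
  simp only [Real.fourier_eq, smul_sub]
  exact integral_sub ((Real.fourierIntegral_convergent_iff ξ).2 h₁)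
    ((Real.fourierIntegral_convergent_iff ξ).2 h₂)

end FourierOfTranslates

theorem MeasureTheory.Measure.AbsolutelyContinuous.exists_pos_forall_measure_lt
    {α : Type*} [MeasurableSpace α] {μ ν : Measure α} [IsFiniteMeasure ν] [SigmaFinite μ]
    (h : ν ≪ μ) {ε : ℝ≥0∞} (hε : ε ≠ 0) : ∃ δ > 0, ∀ s, μ s < δ → ν s < ε := by
  obtain ⟨δ, hδ, H⟩ :=
    exists_pos_setLIntegral_lt_of_measure_lt (Measure.lintegral_rnDeriv_lt_top ν μ).ne hε
  exact ⟨δ, hδ, fun s hs => Measure.setLIntegral_rnDeriv h s ▸ H s hs⟩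

def nearIntBand (r η : ℝ) : Set ℝ := {s | ∃ k : ℤ, |r * s - k| ≤ η}

theorem measurableSet_nearIntBand (r η : ℝ) : MeasurableSet (nearIntBand r η) := by
  simp only [nearIntBand, ofPred_exists]
  exact .iUnion fun k => measurableSet_le (by fun_prop) measurable_const

theorem volume_nearIntBand_inter_Icc_le {r η : ℝ} (hr : 1 < r) (hη : 0 ≤ η) (hη1 : η ≤ 1) :
    volume (nearIntBand r η ∩ Icc (-1) 1) ≤ ENNReal.ofReal (14 * η) := by
  have hr0 : 0 < r := one_pos.trans hr
  set K : ℕ := ⌈r⌉₊ + 1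
  have hK : (K : ℝ) ≤ r + 2 := by
    simp only [K, Nat.cast_add, Nat.cast_one]
    linarith [Nat.ceil_lt_add_one hr0.le]
  have hcover : nearIntBand r η ∩ Icc (-1) 1 ⊆
      ⋃ k ∈ Finset.Icc (-(K : ℤ)) K, Icc ((k - η) / r) ((k + η) / r) := by
    rintro s ⟨⟨k, hk⟩, hs⟩
    rw [abs_le] at hk
    have hrs : |r * s| ≤ r := by
      rw [abs_mul, abs_of_pos hr0]
      exact mul_le_of_le_one_right hr0.le (abs_le.2 hs)
    have hkK : |(k : ℝ)| ≤ K := by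
      have := Nat.le_ceil r
      rw [abs_le] at hrs ⊢
      constructor <;> push_cast [K] <;> linarith
    refine mem_biUnion (x := k) ?_ ⟨?_, ?_⟩
    · rw [Finset.mem_coe, Finset.mem_Icc, ← abs_le]
      exact_mod_cast hkK
    · rw [div_le_iff₀ hr0]; linarith
    · rw [le_div_iff₀ hr0]; linarith
  have hcard : ((Finset.Icc (-(K : ℤ)) K).card : ℝ) = 2 * K + 1 := by
    rw [Int.card_Icc]
    norm_cast
    omega
  calc volume (nearIntBand r η ∩ Icc (-1) 1)
      ≤ ∑ k ∈ Finset.Icc (-(K : ℤ)) K, volume (Icc ((k - η) / r) ((k + η) / r)) :=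
        (measure_mono hcover).trans (measure_biUnion_finset_le _ _)
    _ = ENNReal.ofReal ((2 * K + 1) * (2 * η / r)) := by
        simp only [Real.volume_Icc, ← sub_div, add_sub_sub_cancel, ← two_mul, Finset.sum_const,
          nsmul_eq_mul]
        rw [ENNReal.ofReal_mul (by positivity), ← hcard, ENNReal.ofReal_natCast]
    _ ≤ ENNReal.ofReal (14 * η) := by
        refine ENNReal.ofReal_le_ofReal ?_
        rw [mul_div_assoc', div_le_iff₀ hr0]
        nlinarith

theorem cos_le_cos_of_notMem_nearIntBand {r η s : ℝ} (hη : 0 ≤ η) (hs : s ∉ nearIntBand r η) :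
    cos (2 * π * (r * s)) ≤ cos (2 * π * η) := by
  set θ := r * s
  have hfar : η < |θ - round θ| := by
    by_contra! h
    exact hs ⟨round θ, h⟩
  calc cos (2 * π * θ) = cos (2 * π * |θ - round θ|) := by
        rw [← abs_of_pos two_pi_pos, ← abs_mul, cos_abs, abs_of_pos two_pi_pos,
          show 2 * π * (θ - round θ) = 2 * π * θ - round θ * (2 * π) by ring,
          cos_sub_int_mul_two_pi]
    _ ≤ cos (2 * π * η) := by
        refine cos_le_cos_of_nonneg_of_le_pi (by positivity) ?_ (by gcongr)
        nlinarith [abs_sub_round θ, pi_pos]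

theorem mul_measureReal_compl_nearIntBand_le_integral {ν : Measure ℝ} [IsFiniteMeasure ν]
    (r : ℝ) {η : ℝ} (hη : 0 ≤ η) :
    (1 - cos (2 * π * η)) * ν.real (nearIntBand r η)ᶜ ≤ ∫ s, 1 - cos (2 * π * (r * s)) ∂ν := by
  have hint : Integrable (fun s => 1 - cos (2 * π * (r * s))) ν :=
    .of_bound (by fun_prop) 2 (.of_forall fun s => by
      rw [Real.norm_eq_abs, abs_le]
      constructor <;>
        linarith [neg_one_le_cos (2 * π * (r * s)), cos_le_one (2 * π * (r * s))])
  calc (1 - cos (2 * π * η)) * ν.real (nearIntBand r η)ᶜ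
      = ∫ _ in (nearIntBand r η)ᶜ, 1 - cos (2 * π * η) ∂ν := by
        rw [setIntegral_const, smul_eq_mul, mul_comm]
    _ ≤ ∫ s in (nearIntBand r η)ᶜ, 1 - cos (2 * π * (r * s)) ∂ν :=
        setIntegral_mono_on (integrable_const _).integrableOn hint.integrableOn
          (measurableSet_nearIntBand r η).compl fun s hs => by
            linarith [cos_le_cos_of_notMem_nearIntBand hη hs]
    _ ≤ ∫ s, 1 - cos (2 * π * (r * s)) ∂ν :=
        setIntegral_le_integral hint (.of_forall fun s => sub_nonneg.2 (cos_le_one _))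

theorem volume_setOf_div_sqrt_sq_add_sq_mem {ρ : ℝ} (hρ : 0 < ρ) {N : Set ℝ}
    (hN : volume N = 0) : volume {a : ℝ | a / √(a ^ 2 + ρ ^ 2) ∈ N} = 0 := by
  have hsub : {a : ℝ | a / √(a ^ 2 + ρ ^ 2) ∈ N} ⊆
      (fun s => ρ * s / √(1 - s ^ 2)) '' (N ∩ Ioo (-1) 1) := by
    intro a ha
    have hr : 0 < √(a ^ 2 + ρ ^ 2) := by positivity
    have hlt : |a| < √(a ^ 2 + ρ ^ 2) := by
      rw [← Real.sqrt_sq_eq_abs]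
      exact Real.sqrt_lt_sqrt (sq_nonneg a) (by linarith [sq_pos_of_pos hρ])
    refine ⟨_, ⟨ha, ?_⟩, ?_⟩
    · rw [mem_Ioo, ← abs_lt, abs_div, abs_of_pos hr]
      exact (div_lt_one hr).2 hlt
    · have h1 : 1 - (a / √(a ^ 2 + ρ ^ 2)) ^ 2 = (ρ / √(a ^ 2 + ρ ^ 2)) ^ 2 := by
        field_simp
        linarith [Real.sq_sqrt (by positivity : 0 ≤ a ^ 2 + ρ ^ 2)]
      simp only [h1, Real.sqrt_sq (div_pos hρ hr).le]
      field_simp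
  refine measure_mono_null hsub (addHaar_image_eq_zero_of_differentiableOn_of_addHaar_eq_zero
    volume (fun s hs => ?_) (measure_mono_null inter_subset_left hN))
  have h1 : 0 < 1 - s ^ 2 := by nlinarith [hs.2.1, hs.2.2]
  have hsqrt : DifferentiableAt ℝ (fun s : ℝ => √(1 - s ^ 2)) s :=
    (by fun_prop : DifferentiableAt ℝ (fun s : ℝ => 1 - s ^ 2) s).sqrt h1.ne'
  exact ((by fun_prop : DifferentiableAt ℝ (ρ * ·) s).div hsqrt
    (Real.sqrt_pos.2 h1).ne').differentiableWithinAt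

section Latitude

variable {E F : Type*} [NormedAddCommGroup E] [InnerProductSpace ℝ E] [FiniteDimensional ℝ E]
  [MeasurableSpace E] [BorelSpace E] [NormedAddCommGroup F] [InnerProductSpace ℝ F]
  [FiniteDimensional ℝ F] [MeasurableSpace F] [BorelSpace F]

noncomputable def latitudeMeasure (e : E) : Measure ℝ :=
  (volume : Measure E).toSphere.map fun ω : sphere (0 : E) 1 => ⟪e, (ω : E)⟫

theorem latitudeMeasure_apply (e : E) {S : Set ℝ} (hS : MeasurableSet S) :
    latitudeMeasure e S =
      finrank ℝ E * volume {x : E | x ≠ 0 ∧ ‖x‖ < 1 ∧ ⟪e, ‖x‖⁻¹ • x⟫ ∈ S} := by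
  have hmeas : Measurable fun ω : sphere (0 : E) 1 => ⟪e, (ω : E)⟫ := by fun_prop
  rw [latitudeMeasure, Measure.map_apply hmeas hS, Measure.toSphere_apply' _ (hmeas hS)]
  congr 2
  ext x
  simp only [Set.mem_smul, mem_image, mem_preimage, mem_ofPred_eq, mem_Ioo]
  constructor
  · rintro ⟨a, ⟨ha0, ha1⟩, _, ⟨ω, hω, rfl⟩, rfl⟩
    have hω1 : ‖(ω : E)‖ = 1 := by simp
    refine ⟨smul_ne_zero ha0.ne' (by simp [← norm_ne_zero_iff, hω1]), by
      simpa [norm_smul, hω1, abs_of_pos ha0] using ha1, ?_⟩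
    rwa [norm_smul, hω1, Real.norm_of_nonneg ha0.le, mul_one, inv_smul_smul₀ ha0.ne']
  · rintro ⟨hx0, hx1, hxS⟩
    have hx : 0 < ‖x‖ := norm_pos_iff.2 hx0
    exact ⟨‖x‖, ⟨hx, hx1⟩, _, ⟨⟨‖x‖⁻¹ • x, by simp [norm_smul, hx.ne']⟩, hxS, rfl⟩,
      smul_inv_smul₀ hx.ne' x⟩

theorem latitudeMeasure_map_linearIsometryEquiv (A : E ≃ₗᵢ[ℝ] F) (e : E) :
    latitudeMeasure (A e) = latitudeMeasure e := by
  ext S hS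
  rw [latitudeMeasure_apply _ hS, latitudeMeasure_apply _ hS, A.toLinearEquiv.finrank_eq,
    ← A.measurePreserving.measure_preimage_emb A.toHomeomorph.measurableEmbedding]
  congr 2
  ext x
  simp [← map_smul, A.inner_map_map]

theorem latitudeMeasure_eq_of_norm_eq {e e' : E} (h : ‖e‖ = ‖e'‖) :
    latitudeMeasure e = latitudeMeasure e' := by
  rw [← Submodule.reflection_sub h, latitudeMeasure_map_linearIsometryEquiv]

theorem volume_setOf_inner_normalize_mem (hE : 2 ≤ finrank ℝ E) {e : E} (he : ‖e‖ = 1)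
    {N : Set ℝ} (hNm : MeasurableSet N) (hN : volume N = 0) :
    volume {x : E | x ≠ 0 ∧ ⟪e, ‖x‖⁻¹ • x⟫ ∈ N} = 0 := by
  have hs : MeasurableSet {x : E | x ≠ 0 ∧ ⟪e, ‖x‖⁻¹ • x⟫ ∈ N} :=
    (measurableSet_singleton 0).compl.inter (hNm.preimage (by fun_prop))
  have hspan : volume ((ℝ ∙ e : Submodule ℝ E) : Set E) = 0 := by
    refine Measure.addHaar_submodule _ _ fun htop => ?_
    have := finrank_span_singleton (K := ℝ) (norm_ne_zero_iff.1 (he ▸ one_ne_zero))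
    rw [htop, finrank_top] at this
    omega
  -- Disintegrate along the lines `y + ℝ e`: on each line off `ℝ ∙ e`, the latitude is a
  -- diffeomorphic function of the parameter.
  rw [measure_eq_zero_iff_ae_notMem]
  refine (ae_ae_add_linearMap_mem_iff (LinearMap.toSpanSingleton ℝ E e) volume volume
    hs.compl).1 ?_
  filter_upwards [measure_eq_zero_iff_ae_notMem.1 hspan] with y hy
  set b := ⟪e, y⟫
  set z := y - b • e
  have hz : 0 < ‖z‖ := norm_pos_iff.2 fun h => hy (by
    rw [sub_eq_zero] at h
    exact h ▸ Submodule.smul_mem _ _ (Submodule.mem_span_singleton_self e))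
  have hze : ⟪e, z⟫ = 0 := by simp [z, b, inner_sub_right, real_inner_smul_right, he]
  have hline : ∀ a : ℝ, y + a • e = (b + a) • e + z := fun a => by
    simp only [z, add_smul]; abel
  have key (a : ℝ) :
      ⟪e, ‖y + a • e‖⁻¹ • (y + a • e)⟫ = (b + a) / √((b + a) ^ 2 + ‖z‖ ^ 2) := by
    have hn : ‖y + a • e‖ = √((b + a) ^ 2 + ‖z‖ ^ 2) := by
      rw [hline, ← Real.sqrt_sq (norm_nonneg _), norm_add_sq_real]
      simp [norm_smul, he, real_inner_smul_left, hze]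
    rw [real_inner_smul_right, hn, hline, inner_add_right, real_inner_smul_right,
      real_inner_self_eq_norm_sq, he, hze]
    ring
  have hnull := volume_setOf_div_sqrt_sq_add_sq_mem hz hN
  rw [← measure_preimage_add_right volume b] at hnull
  rw [measure_eq_zero_iff_ae_notMem] at hnull
  filter_upwards [hnull] with a ha
  rintro ⟨-, hmem⟩
  apply ha
  simp only [mem_preimage, mem_ofPred_eq]
  rw [LinearMap.toSpanSingleton_apply, key a, add_comm] at hmem
  exact hmem

theorem latitudeMeasure_absolutelyContinuous (hE : 2 ≤ finrank ℝ E) {e : E} (he : ‖e‖ = 1) :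
    latitudeMeasure e ≪ volume := .mk fun N hNm hN => by
  rw [latitudeMeasure_apply e hNm]
  refine mul_eq_zero_of_right _
    (measure_mono_null ?_ (volume_setOf_inner_normalize_mem hE he hNm hN))
  exact fun x hx => ⟨hx.1, hx.2.2⟩

instance [Nontrivial E] : NeZero (volume : Measure E).toSphere :=
  ⟨Measure.toSphere_ne_zero _⟩

instance (e : E) : IsFiniteMeasure (latitudeMeasure e) := by
  rw [latitudeMeasure]; infer_instance

theorem latitudeMeasure_univ (e : E) :
    latitudeMeasure e univ = (volume : Measure E).toSphere univ := by
  rw [latitudeMeasure, Measure.map_apply (by fun_prop) .univ, preimage_univ]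

theorem latitudeMeasure_compl_Icc {e : E} (he : ‖e‖ = 1) :
    latitudeMeasure e (Icc (-1) 1)ᶜ = 0 := by
  rw [latitudeMeasure, Measure.map_apply (by fun_prop) measurableSet_Icc.compl]
  convert measure_empty (μ := (volume : Measure E).toSphere)
  ext ω
  have := abs_real_inner_le_norm e (ω : E)
  simp_all [abs_le]

theorem exists_pos_forall_latitudeMeasure_nearIntBand_lt (hE : 2 ≤ finrank ℝ E) :
    ∃ η ∈ Ioo (0 : ℝ) 1, ∀ e : E, ‖e‖ = 1 → ∀ r > 1,
      latitudeMeasure e (nearIntBand r η) < (volume : Measure E).toSphere univ / 2 := by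
  have : Nontrivial E := Module.nontrivial_of_finrank_pos (R := ℝ) (by omega)
  obtain ⟨e₀, he₀⟩ := exists_norm_eq E zero_le_one
  have hσ : (volume : Measure E).toSphere univ ≠ 0 := Measure.measure_univ_ne_zero.2 (NeZero.ne _)
  obtain ⟨δ, hδ, hsmall⟩ := (latitudeMeasure_absolutelyContinuous hE he₀)
    |>.exists_pos_forall_measure_lt (ENNReal.half_pos hσ).ne'
  obtain ⟨δ', -, hδ'0, hδ'⟩ := ENNReal.lt_iff_exists_real_btwn.1 hδ
  set η := min 2⁻¹ (δ' / 14)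
  have hη : 0 < η := lt_min (by norm_num) (by linarith [ENNReal.ofReal_pos.1 hδ'0])
  have hη1 : η < 1 := (min_le_left _ _).trans_lt (by norm_num)
  refine ⟨η, ⟨hη, hη1⟩, fun e he r hr => ?_⟩
  calc latitudeMeasure e (nearIntBand r η)
      ≤ latitudeMeasure e (nearIntBand r η ∩ Icc (-1) 1) + latitudeMeasure e (Icc (-1) 1)ᶜ := by
        refine (measure_mono fun s hs => ?_).trans (measure_union_le _ _)
        by_cases h : s ∈ Icc (-1) 1
        exacts [.inl ⟨hs, h⟩, .inr h]
    _ = latitudeMeasure e₀ (nearIntBand r η ∩ Icc (-1) 1) := by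
        rw [latitudeMeasure_compl_Icc he, add_zero,
          latitudeMeasure_eq_of_norm_eq (he.trans he₀.symm)]
    _ < _ := by
        refine hsmall _ ((volume_nearIntBand_inter_Icc_le hr hη.le hη1.le).trans_lt ?_)
        refine lt_of_le_of_lt (ENNReal.ofReal_le_ofReal ?_) hδ'
        linarith [show η ≤ δ' / 14 from min_le_right _ _]

noncomputable def sphericalMultiplier (ζ : E) : ℂ :=
  ((volume : Measure E).toSphere.real univ)⁻¹ •
    ∫ ω : sphere (0 : E) 1, (𝐞 ⟪(ω : E), ζ⟫ : ℂ) ∂(volume : Measure E).toSphere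

theorem re_sphericalMultiplier_smul (e : E) (r : ℝ) :
    (sphericalMultiplier (r • e)).re = ((volume : Measure E).toSphere.real univ)⁻¹ *
      ∫ s, cos (2 * π * (r * s)) ∂latitudeMeasure e := by
  have hint : Integrable (fun ω : sphere (0 : E) 1 => (𝐞 ⟪(ω : E), r • e⟫ : ℂ))
      (volume : Measure E).toSphere :=
    .of_bound (by fun_prop) 1 (.of_forall fun _ => (Circle.norm_coe _).le)
  rw [sphericalMultiplier, Complex.smul_re, smul_eq_mul, ← RCLike.re_to_complex,
    ← integral_re hint, latitudeMeasure, integral_map (by fun_prop) (by fun_prop)]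
  simp_rw [RCLike.re_to_complex, Real.fourierChar_apply, Complex.exp_ofReal_mul_I_re,
    real_inner_smul_right, real_inner_comm]

theorem re_one_sub_sphericalMultiplier_smul [Nontrivial E] (e : E) (r : ℝ) :
    (1 - sphericalMultiplier (r • e)).re = ((volume : Measure E).toSphere.real univ)⁻¹ *
      ∫ s, 1 - cos (2 * π * (r * s)) ∂latitudeMeasure e := by
  have hcos : Integrable (fun s => cos (2 * π * (r * s))) (latitudeMeasure e) :=
    .of_bound (by fun_prop) 1 (.of_forall fun _ => abs_cos_le_one _)
  have hc := measureReal_univ_ne_zero (μ := (volume : Measure E).toSphere)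
  have hν : (latitudeMeasure e).real univ = (volume : Measure E).toSphere.real univ := by
    simp only [measureReal_def, latitudeMeasure_univ]
  rw [Complex.sub_re, Complex.one_re, re_sphericalMultiplier_smul,
    integral_sub (integrable_const 1) hcos, integral_const, smul_eq_mul, mul_one, hν]
  field_simp

theorem exists_pos_le_norm_one_sub_sphericalMultiplier (hE : 2 ≤ finrank ℝ E) :
    ∃ κ > 0, ∀ ζ : E, 1 < ‖ζ‖ → κ ≤ ‖1 - sphericalMultiplier ζ‖ := by
  have : Nontrivial E := Module.nontrivial_of_finrank_pos (R := ℝ) (by omega)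
  obtain ⟨η, ⟨hη0, hη1⟩, hband⟩ := exists_pos_forall_latitudeMeasure_nearIntBand_lt hE
  set c := (volume : Measure E).toSphere.real univ
  have hc : 0 < c := measureReal_univ_pos
  have hcos : cos (2 * π * η) < 1 := (cos_le_one _).lt_of_ne fun h => by
    rw [cos_eq_one_iff_of_lt_of_lt (by nlinarith [pi_pos]) (by nlinarith [pi_pos])] at h
    nlinarith [pi_pos]
  refine ⟨(1 - cos (2 * π * η)) / 2, by linarith, fun ζ hζ => ?_⟩
  set r := ‖ζ‖
  have hr : 0 < r := one_pos.trans hζ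
  set e := r⁻¹ • ζ
  have he : ‖e‖ = 1 := by
    rw [norm_smul, norm_inv, Real.norm_of_nonneg hr.le, inv_mul_cancel₀ hr.ne']
  have hcompl : c / 2 ≤ (latitudeMeasure e).real (nearIntBand r η)ᶜ := by
    have hlt := ENNReal.toReal_strict_mono (ENNReal.div_ne_top (measure_ne_top _ _) two_ne_zero)
      (hband e he r hζ)
    rw [ENNReal.toReal_div, ENNReal.toReal_ofNat, ← measureReal_def, ← measureReal_def] at hlt
    rw [measureReal_compl (measurableSet_nearIntBand r η), measureReal_def,
      latitudeMeasure_univ, ← measureReal_def]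
    linarith
  calc (1 - cos (2 * π * η)) / 2 = c⁻¹ * ((1 - cos (2 * π * η)) * (c / 2)) := by field_simp
    _ ≤ c⁻¹ * ((1 - cos (2 * π * η)) * (latitudeMeasure e).real (nearIntBand r η)ᶜ) := by
        gcongr
    _ ≤ c⁻¹ * ∫ s, 1 - cos (2 * π * (r * s)) ∂latitudeMeasure e := by
        gcongr
        exact mul_measureReal_compl_nearIntBand_le_integral r hη0.le
    _ = (1 - sphericalMultiplier ζ).re := by
        rw [← re_one_sub_sphericalMultiplier_smul, smul_inv_smul₀ hr.ne']
    _ ≤ ‖1 - sphericalMultiplier ζ‖ := Complex.re_le_norm _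

end Latitude

theorem sphericalMean_eq_smul_integral (n : ℕ) (f : EuclideanSpace ℝ (Fin n) → ℂ) (t : ℝ) :
    sphericalMean n f t = ((volume : Measure (EuclideanSpace ℝ (Fin n))).toSphere.real univ)⁻¹ •
      fun x => ∫ ω : sphere (0 : EuclideanSpace ℝ (Fin n)) 1,
        f (x + t • (ω : EuclideanSpace ℝ (Fin n)))
        ∂(volume : Measure (EuclideanSpace ℝ (Fin n))).toSphere :=
  rfl

theorem integrable_sphericalMean {n : ℕ} {f : EuclideanSpace ℝ (Fin n) → ℂ} (hf : Integrable f)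
    (t : ℝ) : Integrable (sphericalMean n f t) := by
  rw [sphericalMean_eq_smul_integral]
  exact (integrable_integral_comp_add hf (by fun_prop)).smul _

theorem fourier_sphericalMean {n : ℕ} {f : EuclideanSpace ℝ (Fin n) → ℂ} (hf : Integrable f)
    (t : ℝ) (ξ : EuclideanSpace ℝ (Fin n)) :
    𝓕 (sphericalMean n f t) ξ = sphericalMultiplier (t • ξ) * 𝓕 f ξ := by
  have hsmul (c : ℂ) (F : EuclideanSpace ℝ (Fin n) → ℂ) : 𝓕 (c • F) ξ = c • 𝓕 F ξ :=
    congrFun (VectorFourier.fourierIntegral_const_smul 𝐞 volume (innerₗ _) F c) ξ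
  rw [sphericalMean_eq_smul_integral, ← Complex.coe_smul, hsmul,
    fourier_integral_comp_add hf (by fun_prop), sphericalMultiplier, smul_smul,
    ← Complex.coe_smul, smul_eq_mul, smul_eq_mul]
  simp_rw [real_inner_smul_left, real_inner_smul_right]

theorem quantified_riemann_lebesgue_L1 (n : ℕ) (hn : 2 ≤ n) :
    ∃ C : ℝ, 0 < C ∧
      ∀ (f : EuclideanSpace ℝ (Fin n) → ℂ), Integrable f → ∀ t : ℝ, 0 < t →
        ∀ ξ : EuclideanSpace ℝ (Fin n), 1 / t < ‖ξ‖ →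
          ‖𝓕 f ξ‖ ≤ C * ∫ x, ‖sphericalMean n f t x - f x‖ := by
  obtain ⟨κ, hκ, hmult⟩ := exists_pos_le_norm_one_sub_sphericalMultiplier
    (E := EuclideanSpace ℝ (Fin n)) (by rwa [finrank_euclideanSpace_fin])
  refine ⟨κ⁻¹, inv_pos.2 hκ, fun f hf t ht ξ hξ => ?_⟩
  have htξ : 1 < ‖t • ξ‖ := by
    rwa [norm_smul, Real.norm_of_nonneg ht.le, ← div_lt_iff₀' ht]
  have hdiff : 𝓕 (fun x => sphericalMean n f t x - f x) ξ =
      -((1 - sphericalMultiplier (t • ξ)) * 𝓕 f ξ) := by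
    rw [fourier_sub_apply (integrable_sphericalMean hf t) hf, fourier_sphericalMean hf]
    ring
  calc ‖𝓕 f ξ‖ ≤ κ⁻¹ * (‖1 - sphericalMultiplier (t • ξ)‖ * ‖𝓕 f ξ‖) := by
        rw [← div_eq_inv_mul, le_div_iff₀ hκ, mul_comm]
        gcongr
        exact hmult _ htξ
    _ = κ⁻¹ * ‖𝓕 (fun x => sphericalMean n f t x - f x) ξ‖ := by rw [hdiff, norm_neg, norm_mul]
    _ ≤ κ⁻¹ * ∫ x, ‖sphericalMean n f t x - f x‖ := by
        gcongr
        exact VectorFourier.norm_fourierIntegral_le_integral_norm _ _ _ _ _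
end
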